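/- Let (X,T) be a topological dynamical system, K ⊂ X a compact set, b a gauge function on ℕ, and N ∈ ℕ, ε > 0. Then M^b_{N,3ε}(K) ≤ W^b_{N,ε}(K) ≤ M^b_{N,ε}(K), where W is the weighted Bowen-ball covering quantity. Consequently M^b(K) = W^b(K). -/

import Mathlib

open Filter Set MeasureTheory Topology
open scoped ENNReal NNReal

section DynDefs
variable {X : Type*} [MetricSpace X]

/-- The open Bowen ball of order `n` and radius `ε` centered at `x`. -/
def bowenBall (T : X → X) (n : ℕ) (x : X) (ε : ℝ) : Set X :=
  {y | ∀ k < n, dist (T^[k] x) (T^[k] y) < ε}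

/-- The closed Bowen ball of order `n` and radius `ε` centered at `x`. -/
def closedBowenBall (T : X → X) (n : ℕ) (x : X) (ε : ℝ) : Set X :=
  {y | ∀ k < n, dist (T^[k] x) (T^[k] y) ≤ ε}

/-- A gauge (dimension) function on `ℕ`: positive, antitone, tending to `0`. -/
def GaugeSeq (b : ℕ → ℝ) : Prop :=
  (∀ n, 0 < b n) ∧ Antitone b ∧ Tendsto b atTop (nhds 0)

/-- `M^b_{N,ε}(Z)`: infimum of `∑ b(n_i)` over countable covers of `Z` by Bowen
balls of radius `ε` and orders `≥ N`. -/
noncomputable def bowenM (T : X → X) (b : ℕ → ℝ) (N : ℕ) (ε : ℝ) (Z : Set X) : ℝ≥0∞ :=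
  sInf { r : ℝ≥0∞ | ∃ (x : ℕ → X) (n : ℕ → ℕ), (∀ i, N ≤ n i) ∧
      Z ⊆ ⋃ i, bowenBall T (n i) (x i) ε ∧ r = ∑' i, ENNReal.ofReal (b (n i)) }

/-- `M^b_ε(Z) = lim_{N → ∞} M^b_{N,ε}(Z) = sup_N M^b_{N,ε}(Z)`. -/
noncomputable def bowenMe (T : X → X) (b : ℕ → ℝ) (ε : ℝ) (Z : Set X) : ℝ≥0∞ :=
  ⨆ N : ℕ, bowenM T b N ε Z

/-- `M^b(Z) = lim_{ε → 0} M^b_ε(Z) = sup_{ε > 0} M^b_ε(Z)`. -/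
noncomputable def bowenMFull (T : X → X) (b : ℕ → ℝ) (Z : Set X) : ℝ≥0∞ :=
  ⨆ ε : {ε : ℝ // 0 < ε}, bowenMe T b ε.1 Z

/-- Bowen topological entropy of `Z` at scale `ε`: the critical exponent where
`M^s_ε(Z)` jumps from `∞` to `0`. -/
noncomputable def bowenEntropyE (T : X → X) (ε : ℝ) (Z : Set X) : ℝ≥0∞ :=
  ⨆ s : {s : ℝ≥0 // bowenMe T (fun n => Real.exp (-(s : ℝ) * (n : ℝ))) ε Z = ⊤}, (s.1 : ℝ≥0∞)

/-- Bowen topological entropy of a subset `Z`. -/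
noncomputable def bowenEntropy (T : X → X) (Z : Set X) : ℝ≥0∞ :=
  ⨆ ε : {ε : ℝ // 0 < ε}, bowenEntropyE T ε.1 Z

/-- `P^s_{N,ε}(Z)`: supremum of `∑ e^{-s n_i}` over countable pairwise disjoint
families of closed Bowen balls with centers in `Z` and orders `≥ N`. -/
noncomputable def packP (T : X → X) (s : ℝ) (N : ℕ) (ε : ℝ) (Z : Set X) : ℝ≥0∞ :=
  sSup { r : ℝ≥0∞ | ∃ (J : Set ℕ) (x : ℕ → X) (n : ℕ → ℕ),
      (∀ i ∈ J, x i ∈ Z ∧ N ≤ n i) ∧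
      (J.PairwiseDisjoint fun i => closedBowenBall T (n i) (x i) ε) ∧
      r = ∑' i : J, ENNReal.ofReal (Real.exp (-s * ((n i.1 : ℕ) : ℝ))) }

/-- `P^s_ε(Z) = lim_{N → ∞} P^s_{N,ε}(Z) = inf_N P^s_{N,ε}(Z)`. -/
noncomputable def packPe (T : X → X) (s : ℝ) (ε : ℝ) (Z : Set X) : ℝ≥0∞ :=
  ⨅ N : ℕ, packP T s N ε Z

/-- `𝒫^s_ε(Z)`: the packing pre-measure, infimum of `∑_i P^s_ε(Z_i)` over
countable covers `{Z_i}` of `Z`. -/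
noncomputable def packMeasE (T : X → X) (s : ℝ) (ε : ℝ) (Z : Set X) : ℝ≥0∞ :=
  ⨅ (Zi : ℕ → Set X) (_ : Z ⊆ ⋃ i, Zi i), ∑' i, packPe T s ε (Zi i)

/-- Packing topological entropy of `Z` at scale `ε`: the critical exponent where
`𝒫^s_ε(Z)` jumps from `∞` to `0`. -/
noncomputable def packEntropyE (T : X → X) (ε : ℝ) (Z : Set X) : ℝ≥0∞ :=
  ⨆ s : {s : ℝ≥0 // packMeasE T (s : ℝ) ε Z = ⊤}, (s.1 : ℝ≥0∞)

/-- Packing topological entropy of a subset `Z`. -/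
noncomputable def packEntropy (T : X → X) (Z : Set X) : ℝ≥0∞ :=
  ⨆ ε : {ε : ℝ // 0 < ε}, packEntropyE T ε.1 Z

/-- `-(1/n) log a`, valued in `ℝ≥0∞`, with the convention `log 0 = -∞`. -/
noncomputable def negLogDiv (a : ℝ≥0∞) (n : ℕ) : ℝ≥0∞ :=
  if a = 0 then ⊤ else ENNReal.ofReal (-(Real.log a.toReal) / (n : ℝ))

/-- Minimal cardinality of a finite `(n,ε)`-spanning set of `Z`. -/
noncomputable def spanCard (T : X → X) (n : ℕ) (ε : ℝ) (Z : Set X) : ℝ≥0∞ :=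
  ⨅ (E : Finset X) (_ : ∀ z ∈ Z, ∃ y ∈ E, ∀ k < n, dist (T^[k] z) (T^[k] y) ≤ ε),
    (E.card : ℝ≥0∞)

/-- Topological entropy of a subset `Z` defined via spanning sets. -/
noncomputable def htopSet (T : X → X) (Z : Set X) : ℝ≥0∞ :=
  ⨆ ε : {ε : ℝ // 0 < ε},
    Filter.limsup (fun n => ENNReal.ofReal (Real.log (spanCard T n ε.1 Z).toReal / (n : ℝ))) atTop

/-- `W^b_{N,ε}(Z)`: the weighted Bowen-ball covering quantity, infimum of
`∑ c_i b(n_i)` over weighted families with `∑ c_i χ_{B_{n_i}(x_i,ε)} ≥ χ_Z`. -/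
noncomputable def weightedW (T : X → X) (b : ℕ → ℝ) (N : ℕ) (ε : ℝ) (Z : Set X) : ℝ≥0∞ :=
  sInf { r : ℝ≥0∞ | ∃ (x : ℕ → X) (n : ℕ → ℕ) (c : ℕ → ℝ),
      (∀ i, 0 < c i) ∧ (∀ i, N ≤ n i) ∧
      (∀ z ∈ Z, (1 : ℝ≥0∞) ≤
        ∑' i, Set.indicator (bowenBall T (n i) (x i) ε) (fun _ => ENNReal.ofReal (c i)) z) ∧
      r = ∑' i, ENNReal.ofReal (c i) * ENNReal.ofReal (b (n i)) }

/-- `W^b(Z)`: double limit of `W^b_{N,ε}(Z)` as `N → ∞` and `ε → 0`. -/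
noncomputable def weightedWFull (T : X → X) (b : ℕ → ℝ) (Z : Set X) : ℝ≥0∞ :=
  ⨆ ε : {ε : ℝ // 0 < ε}, ⨆ N : ℕ, weightedW T b N ε Z

end DynDefs

section MeasDefs
variable {X : Type*} [MetricSpace X] [MeasurableSpace X]

/-- Local upper entropy of `μ` at `x` for radius `ε`. -/
noncomputable def upperLocalEntropyE (T : X → X) (μ : Measure X) (x : X) (ε : ℝ) : ℝ≥0∞ :=
  Filter.limsup (fun n => negLogDiv (μ (bowenBall T n x ε)) n) atTop

/-- Local lower entropy of `μ` at `x` for radius `ε`. -/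
noncomputable def lowerLocalEntropyE (T : X → X) (μ : Measure X) (x : X) (ε : ℝ) : ℝ≥0∞ :=
  Filter.liminf (fun n => negLogDiv (μ (bowenBall T n x ε)) n) atTop

/-- Local upper entropy `h̄_μ(T,x) = lim_{ε → 0} limsup_n -(1/n) log μ(B_n(x,ε))`. -/
noncomputable def upperLocalEntropy (T : X → X) (μ : Measure X) (x : X) : ℝ≥0∞ :=
  ⨆ ε : {ε : ℝ // 0 < ε}, upperLocalEntropyE T μ x ε.1

/-- Local lower entropy `h̲_μ(T,x) = lim_{ε → 0} liminf_n -(1/n) log μ(B_n(x,ε))`. -/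
noncomputable def lowerLocalEntropy (T : X → X) (μ : Measure X) (x : X) : ℝ≥0∞ :=
  ⨆ ε : {ε : ℝ // 0 < ε}, lowerLocalEntropyE T μ x ε.1

/-- Measure-theoretical upper entropy `h̄_μ(T) = ∫ h̄_μ(T,x) dμ`. -/
noncomputable def upperEntropy (T : X → X) (μ : Measure X) : ℝ≥0∞ :=
  ∫⁻ x, upperLocalEntropy T μ x ∂μ

/-- Measure-theoretical lower entropy `h̲_μ(T) = ∫ h̲_μ(T,x) dμ`. -/
noncomputable def lowerEntropy (T : X → X) (μ : Measure X) : ℝ≥0∞ :=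
  ∫⁻ x, lowerLocalEntropy T μ x ∂μ

end MeasDefs

/-! Covers by Bowen balls are weighted covers with unit weights, whence `W ≤ M`. Conversely, a
weighted cover `∑ cᵢ χ_{Bᵢ} ≥ 1` of the compact set `K` may be truncated, by lower
semicontinuity, to a finite one of height `> a` on `K` for any `a < 1`. Scaling the weights by
`q` and rounding them up to integers gives a multiple cover of `K`; a cover of multiplicity `m`
by `ε`-balls yields, by `m` rounds of the Vitali lemma for Bowen balls, `m` disjoint subfamilies
whose `3ε`-enlargements each cover `K`, so its cost is at least `m M_{3ε}(K)`. The rounding error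
does not grow with `q` and disappears after dividing by `q → ∞`. -/

theorem ENNReal.le_of_forall_natCast_mul_le_mul_add {x y c : ℝ≥0∞} (hc : c ≠ ⊤)
    (h : ∀ q : ℕ, (q : ℝ≥0∞) * x ≤ q * y + c) : x ≤ y := by
  refine ENNReal.le_of_forall_pos_le_add fun η hη _ => ?_
  have hη0 : (η : ℝ≥0∞) ≠ 0 := ENNReal.coe_ne_zero.mpr hη.ne'
  obtain ⟨q, hq⟩ := ENNReal.exists_nat_gt (ENNReal.div_ne_top hc hη0)
  have hq0 : (q : ℝ≥0∞) ≠ 0 := ne_bot_of_gt hq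
  have hcq : c ≤ q * η := by
    rw [ENNReal.div_lt_iff (Or.inl hη0) (Or.inl ENNReal.coe_ne_top)] at hq
    exact hq.le
  rw [← ENNReal.mul_le_mul_iff_right hq0 (ENNReal.natCast_ne_top q), mul_add]
  exact (h q).trans (add_le_add_right hcq _)

theorem IsCompact.exists_finset_lt_sum {X ι : Type*} [TopologicalSpace X] {K : Set X}
    (hK : IsCompact K) {f : ι → X → ℝ≥0∞} (hf : ∀ i, LowerSemicontinuous (f i)) {a : ℝ≥0∞}
    (ha : ∀ z ∈ K, a < ∑' i, f i z) : ∃ I : Finset ι, ∀ z ∈ K, a < ∑ i ∈ I, f i z := by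
  have hopen (I : Finset ι) : IsOpen {z | a < ∑ i ∈ I, f i z} :=
    (lowerSemicontinuous_sum fun i _ => hf i).isOpen_preimage a
  have hcover : K ⊆ ⋃ I : Finset ι, {z | a < ∑ i ∈ I, f i z} := fun z hz => by
    have := ha z hz
    rw [ENNReal.tsum_eq_iSup_sum] at this
    exact Set.mem_iUnion.mpr (lt_iSup_iff.mp this)
  exact hK.elim_directed_cover _ hopen hcover <| Monotone.directed_le fun I J hIJ z (hz : a < _) =>
    (hz.trans_le (Finset.sum_le_sum_of_subset hIJ) : a < _)

section BowenBall

variable {X : Type*} [MetricSpace X] {T : X → X}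

theorem mem_bowenBall_self {ε : ℝ} (hε : 0 < ε) (n : ℕ) (x : X) : x ∈ bowenBall T n x ε :=
  fun _ _ => by simpa using hε

theorem isOpen_bowenBall (hT : Continuous T) (n : ℕ) (x : X) (ε : ℝ) :
    IsOpen (bowenBall T n x ε) := by
  have : bowenBall T n x ε = ⋂ k ∈ Finset.range n, T^[k] ⁻¹' Metric.ball (T^[k] x) ε := by
    ext y
    simp [bowenBall, Metric.mem_ball, dist_comm]
  rw [this]
  exact isOpen_biInter_finset fun k _ => Metric.isOpen_ball.preimage (hT.iterate k)

theorem bowenBall_subset_three_mul_of_le {n n' : ℕ} {x x' : X} {ε : ℝ} (hle : n' ≤ n)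
    (hne : (bowenBall T n x ε ∩ bowenBall T n' x' ε).Nonempty) :
    bowenBall T n x ε ⊆ bowenBall T n' x' (3 * ε) := by
  obtain ⟨w, hwx, hwx'⟩ := hne
  intro z hz k hk
  calc dist (T^[k] x') (T^[k] z)
      ≤ dist (T^[k] x') (T^[k] w) + dist (T^[k] x) (T^[k] w) + dist (T^[k] x) (T^[k] z) :=
        (dist_triangle4 _ _ (T^[k] x) _).trans_eq (by rw [dist_comm (T^[k] w)])
    _ < ε + ε + ε :=
        add_lt_add (add_lt_add (hwx' k hk) (hwx k (hk.trans_le hle))) (hz k (hk.trans_le hle))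
    _ = 3 * ε := by ring

theorem exists_disjoint_bowenBall_subfamily {ι : Type*} {ε : ℝ} (hε : 0 < ε) (x : ι → X)
    (n : ι → ℕ) (t : Set ι) :
    ∃ u ⊆ t, u.PairwiseDisjoint (fun i => bowenBall T (n i) (x i) ε) ∧
      ∀ i ∈ t, ∃ j ∈ u, bowenBall T (n i) (x i) ε ⊆ bowenBall T (n j) (x j) (3 * ε) := by
  -- Balls of small order are the large ones: `2⁻¹ ^ n i` serves as the size of the `i`-th ball.
  obtain ⟨u, hut, hdisj, hcover⟩ := Vitali.exists_disjoint_subfamily_covering_enlargement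
    (fun i => bowenBall T (n i) (x i) ε) t (fun i => (2⁻¹ : ℝ) ^ n i) (3 / 2) (by norm_num)
    (fun _ _ => by positivity) 1 (fun _ _ => pow_le_one₀ (by norm_num) (by norm_num))
    (fun i _ => ⟨x i, mem_bowenBall_self hε _ _⟩)
  refine ⟨u, hut, hdisj, fun i hi => ?_⟩
  obtain ⟨j, hju, hmeet, hsize⟩ := hcover i hi
  refine ⟨j, hju, bowenBall_subset_three_mul_of_le ?_ hmeet⟩
  by_contra! hlt
  have : (2⁻¹ : ℝ) ^ n j ≤ 2⁻¹ ^ n i * 2⁻¹ :=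
    pow_succ (2⁻¹ : ℝ) (n i) ▸ pow_le_pow_of_le_one (by norm_num) (by norm_num) hlt
  have : (0 : ℝ) < 2⁻¹ ^ n i := by positivity
  linarith

variable {b : ℕ → ℝ}

theorem exists_orders_tsum_le (hb : Tendsto b atTop (𝓝 0)) (N : ℕ) {η : ℝ≥0∞} (hη : η ≠ 0) :
    ∃ m : ℕ → ℕ, (∀ i, N ≤ m i) ∧ ∑' i, ENNReal.ofReal (b (m i)) ≤ η := by
  obtain ⟨δ, hδ, hδη⟩ := ENNReal.exists_pos_sum_of_countable hη ℕ
  have : ∀ i, ∃ m, N ≤ m ∧ b m < δ i := fun i =>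
    ((eventually_ge_atTop N).and (hb.eventually (gt_mem_nhds (hδ i)))).exists
  choose m hNm hm using this
  refine ⟨m, hNm, le_trans (ENNReal.tsum_le_tsum fun i => ?_) hδη.le⟩
  rw [← ENNReal.ofReal_coe_nnreal]
  exact ENNReal.ofReal_le_ofReal (hm i).le

/-- The definition of `bowenM` asks for infinitely many balls: a finite cover is padded by balls
of large order and arbitrarily small total cost. -/
theorem bowenM_le_sum_of_subset_biUnion [Nonempty X] (hb : Tendsto b atTop (𝓝 0)) {N : ℕ}
    {r : ℝ} {K : Set X} (I : Finset ℕ) (x : ℕ → X) (n : ℕ → ℕ) (hn : ∀ i ∈ I, N ≤ n i)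
    (hK : K ⊆ ⋃ i ∈ I, bowenBall T (n i) (x i) r) :
    bowenM T b N r K ≤ ∑ i ∈ I, ENNReal.ofReal (b (n i)) := by
  refine ENNReal.le_of_forall_pos_le_add fun η hη _ => ?_
  obtain ⟨m, hNm, hm⟩ := exists_orders_tsum_le hb N (ENNReal.coe_ne_zero.mpr hη.ne')
  classical
  let n' : ℕ → ℕ := fun i => if i ∈ I then n i else m i
  have hcost : ∀ i, ENNReal.ofReal (b (n' i))
      ≤ (I : Set ℕ).indicator (fun i => ENNReal.ofReal (b (n i))) i + ENNReal.ofReal (b (m i)) := by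
    intro i
    by_cases hi : i ∈ I <;> simp [n', hi]
  calc bowenM T b N r K ≤ ∑' i, ENNReal.ofReal (b (n' i)) := by
        refine sInf_le ⟨x, n', fun i => ?_, fun z hz => ?_, rfl⟩
        · by_cases hi : i ∈ I <;> simp [n', hi, hn, hNm]
        · obtain ⟨i, hi, hzi⟩ := Set.mem_iUnion₂.mp (hK hz)
          exact Set.mem_iUnion.mpr ⟨i, by simpa [n', hi] using hzi⟩
    _ ≤ ∑' i, ((I : Set ℕ).indicator (fun i => ENNReal.ofReal (b (n i))) i
          + ENNReal.ofReal (b (m i))) := ENNReal.tsum_le_tsum hcost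
    _ ≤ ∑ i ∈ I, ENNReal.ofReal (b (n i)) + η := by
        rw [ENNReal.tsum_add, ← sum_eq_tsum_indicator]
        gcongr

open scoped Classical in
theorem natCast_mul_bowenM_three_mul_le_sum [Nonempty X] (hb : Tendsto b atTop (𝓝 0)) {N : ℕ}
    {ε : ℝ} (hε : 0 < ε) {K : Set X} (I : Finset ℕ) (x : ℕ → X) (n : ℕ → ℕ) (hn : ∀ i ∈ I, N ≤ n i)
    (q : ℕ) (p : ℕ → ℕ) (hK : ∀ z ∈ K, q ≤ ∑ i ∈ I with z ∈ bowenBall T (n i) (x i) ε, p i) :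
    q * bowenM T b N (3 * ε) K ≤ ∑ i ∈ I, (p i : ℝ≥0∞) * ENNReal.ofReal (b (n i)) := by
  induction q generalizing p with
  | zero => simp
  | succ q ih =>
    obtain ⟨u, hut, hdisj, hcover⟩ :=
      exists_disjoint_bowenBall_subfamily (T := T) hε x n {i | i ∈ I ∧ 0 < p i}
    obtain ⟨U, rfl⟩ := ((I.filter (0 < p ·)).finite_toSet.subset
      (by simpa [Set.subset_def] using hut)).exists_finset_coe
    have hUI : U ⊆ I := fun i hi => (hut hi).1
    let p' : ℕ → ℕ := fun i => p i - if i ∈ U then 1 else 0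
    have hp (i : ℕ) : p i = p' i + if i ∈ U then 1 else 0 :=
      (Nat.sub_add_cancel (by split_ifs with hi; exacts [(hut hi).2, Nat.zero_le _])).symm
    have hK' : ∀ z ∈ K, q ≤ ∑ i ∈ I with z ∈ bowenBall T (n i) (x i) ε, p' i := by
      intro z hz
      have hU1 : ({i ∈ {i ∈ I | z ∈ bowenBall T (n i) (x i) ε} | i ∈ U}).card ≤ 1 :=
        Finset.card_le_one.mpr fun i hi j hj => by
          simp only [Finset.mem_filter] at hi hj
          exact hdisj.elim_set hi.2 hj.2 z hi.1.2 hj.1.2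
      have := hK z hz
      rw [Finset.sum_congr rfl fun i _ => hp i, Finset.sum_add_distrib, Finset.sum_boole] at this
      simp only [Nat.cast_id] at this
      omega
    have hKU : K ⊆ ⋃ j ∈ U, bowenBall T (n j) (x j) (3 * ε) := by
      intro z hz
      obtain ⟨i, hi, hpi⟩ := Finset.exists_ne_zero_of_sum_ne_zero
        (Nat.pos_iff_ne_zero.mp ((Nat.succ_pos q).trans_le (hK z hz)))
      rw [Finset.mem_filter] at hi
      obtain ⟨j, hjU, hij⟩ := hcover i ⟨hi.1, Nat.pos_of_ne_zero hpi⟩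
      exact Set.mem_biUnion hjU (hij hi.2)
    calc ((q + 1 : ℕ) : ℝ≥0∞) * bowenM T b N (3 * ε) K
        = q * bowenM T b N (3 * ε) K + bowenM T b N (3 * ε) K := by push_cast; ring
      _ ≤ ∑ i ∈ I, (p' i : ℝ≥0∞) * ENNReal.ofReal (b (n i)) + ∑ i ∈ U, ENNReal.ofReal (b (n i)) :=
        add_le_add (ih p' hK')
          (bowenM_le_sum_of_subset_biUnion hb U x n (fun i hi => hn i (hUI hi)) hKU)
      _ = ∑ i ∈ I, (p i : ℝ≥0∞) * ENNReal.ofReal (b (n i)) := by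
        simp_rw [hp, Nat.cast_add, add_mul, Finset.sum_add_distrib, Nat.cast_ite, Nat.cast_one,
          Nat.cast_zero, ite_mul, one_mul, zero_mul, Finset.sum_ite_mem,
          Finset.inter_eq_right.mpr hUI]

open scoped Classical in
theorem mul_bowenM_three_mul_le_sum [Nonempty X] (hb : Tendsto b atTop (𝓝 0)) {N : ℕ} {ε : ℝ}
    (hε : 0 < ε) {K : Set X} (I : Finset ℕ) (x : ℕ → X) (n : ℕ → ℕ) (c : ℕ → ℝ)
    (hc : ∀ i, 0 ≤ c i) (hn : ∀ i ∈ I, N ≤ n i) {a : ℝ≥0}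
    (hK : ∀ z ∈ K, (a : ℝ≥0∞) ≤
      ∑ i ∈ I, (bowenBall T (n i) (x i) ε).indicator (fun _ => ENNReal.ofReal (c i)) z) :
    a * bowenM T b N (3 * ε) K ≤ ∑ i ∈ I, ENNReal.ofReal (c i) * ENNReal.ofReal (b (n i)) := by
  refine ENNReal.le_of_forall_natCast_mul_le_mul_add (c := ∑ i ∈ I, ENNReal.ofReal (b (n i)))
    (ENNReal.sum_ne_top.mpr fun i _ => ENNReal.ofReal_ne_top) fun q => ?_
  let p : ℕ → ℕ := fun i => ⌈q * c i⌉₊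
  have hqc (i : ℕ) : (q : ℝ≥0∞) * ENNReal.ofReal (c i) = ENNReal.ofReal (q * c i) := by
    rw [ENNReal.ofReal_mul (Nat.cast_nonneg q), ENNReal.ofReal_natCast]
  have hp_ge (i : ℕ) : (q : ℝ≥0∞) * ENNReal.ofReal (c i) ≤ p i := by
    rw [hqc, ← ENNReal.ofReal_natCast]
    exact ENNReal.ofReal_le_ofReal (Nat.le_ceil _)
  have hp_le (i : ℕ) : (p i : ℝ≥0∞) ≤ q * ENNReal.ofReal (c i) + 1 := by
    rw [hqc, ← ENNReal.ofReal_natCast, ← ENNReal.ofReal_one,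
      ← ENNReal.ofReal_add (by have := hc i; positivity) zero_le_one]
    exact ENNReal.ofReal_le_ofReal (Nat.ceil_lt_add_one (by have := hc i; positivity)).le
  have hmult : ∀ z ∈ K, ⌈q * a⌉₊ ≤ ∑ i ∈ I with z ∈ bowenBall T (n i) (x i) ε, p i := by
    intro z hz
    rw [Nat.ceil_le, ← ENNReal.coe_le_coe]
    push_cast
    calc (q : ℝ≥0∞) * a
        ≤ q * ∑ i ∈ I, (bowenBall T (n i) (x i) ε).indicator (fun _ => ENNReal.ofReal (c i)) z :=
          mul_le_mul_right (hK z hz) _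
      _ = ∑ i ∈ I with z ∈ bowenBall T (n i) (x i) ε, q * ENNReal.ofReal (c i) := by
          simp only [Finset.mul_sum, Finset.sum_filter, Set.indicator_apply, mul_ite, mul_zero]
      _ ≤ ∑ i ∈ I with z ∈ bowenBall T (n i) (x i) ε, (p i : ℝ≥0∞) :=
          Finset.sum_le_sum fun i _ => hp_ge i
  calc (q : ℝ≥0∞) * (a * bowenM T b N (3 * ε) K)
      = ((q * a : ℝ≥0) : ℝ≥0∞) * bowenM T b N (3 * ε) K := by push_cast; ring
    _ ≤ (⌈q * a⌉₊ : ℝ≥0∞) * bowenM T b N (3 * ε) K := by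
        gcongr
        exact_mod_cast Nat.le_ceil _
    _ ≤ ∑ i ∈ I, (p i : ℝ≥0∞) * ENNReal.ofReal (b (n i)) :=
        natCast_mul_bowenM_three_mul_le_sum hb hε I x n hn _ p hmult
    _ ≤ ∑ i ∈ I, (q * ENNReal.ofReal (c i) + 1) * ENNReal.ofReal (b (n i)) := by
        gcongr with i
        exact hp_le i
    _ = q * ∑ i ∈ I, ENNReal.ofReal (c i) * ENNReal.ofReal (b (n i))
          + ∑ i ∈ I, ENNReal.ofReal (b (n i)) := by
        simp only [add_mul, one_mul, Finset.sum_add_distrib, Finset.mul_sum, mul_assoc]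

theorem bowenM_three_mul_le_weightedW (hT : Continuous T) {K : Set X} (hK : IsCompact K)
    (hb : Tendsto b atTop (𝓝 0)) (N : ℕ) {ε : ℝ} (hε : 0 < ε) :
    bowenM T b N (3 * ε) K ≤ weightedW T b N ε K := by
  refine le_sInf ?_
  rintro _ ⟨x, n, c, hc, hn, hKc, rfl⟩
  have : Nonempty X := ⟨x 0⟩
  refine ENNReal.le_of_forall_lt_one_mul_le fun a ha => ?_
  lift a to ℝ≥0 using ha.ne_top
  obtain ⟨I, hI⟩ := hK.exists_finset_lt_sum
    (fun i => (isOpen_bowenBall hT (n i) (x i) ε).lowerSemicontinuous_indicator zero_le)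
    fun z hz => ha.trans_le (hKc z hz)
  calc (a : ℝ≥0∞) * bowenM T b N (3 * ε) K
      ≤ ∑ i ∈ I, ENNReal.ofReal (c i) * ENNReal.ofReal (b (n i)) :=
        mul_bowenM_three_mul_le_sum hb hε I x n c (fun i => (hc i).le) (fun i _ => hn i) fun z hz =>
          (hI z hz).le
    _ ≤ ∑' i, ENNReal.ofReal (c i) * ENNReal.ofReal (b (n i)) := ENNReal.sum_le_tsum I

theorem weightedW_le_bowenM (T : X → X) (b : ℕ → ℝ) (N : ℕ) (ε : ℝ) (K : Set X) :
    weightedW T b N ε K ≤ bowenM T b N ε K := by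
  refine le_sInf ?_
  rintro _ ⟨x, n, hn, hK, rfl⟩
  refine sInf_le ⟨x, n, fun _ => 1, fun _ => one_pos, hn, fun z hz => ?_, by simp⟩
  obtain ⟨i, hi⟩ := Set.mem_iUnion.mp (hK hz)
  calc (1 : ℝ≥0∞)
      = (bowenBall T (n i) (x i) ε).indicator (fun _ => ENNReal.ofReal 1) z := by simp [hi]
    _ ≤ ∑' j, (bowenBall T (n j) (x j) ε).indicator (fun _ => ENNReal.ofReal 1) z :=
        ENNReal.le_tsum i

end BowenBall

theorem stmt9_general {X : Type*} [MetricSpace X]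
    (T : X → X) (hT : Continuous T)
    (K : Set X) (hK : IsCompact K)
    (b : ℕ → ℝ) (hb : GaugeSeq b) (N : ℕ) (ε : ℝ) (hε : 0 < ε) :
    bowenM T b N (3 * ε) K ≤ weightedW T b N ε K ∧
    weightedW T b N ε K ≤ bowenM T b N ε K ∧
    bowenMFull T b K = weightedWFull T b K := by
  refine ⟨bowenM_three_mul_le_weightedW hT hK hb.2.2 N hε, weightedW_le_bowenM T b N ε K,
    le_antisymm ?_ (iSup_mono fun δ => iSup_mono fun M => weightedW_le_bowenM T b M δ.1 K)⟩
  refine iSup_le fun δ => iSup_le fun M => ?_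
  have hδ : 0 < δ.1 / 3 := div_pos δ.2 three_pos
  calc bowenM T b M δ.1 K = bowenM T b M (3 * (δ.1 / 3)) K := by
        rw [mul_div_cancel₀ _ three_ne_zero]
    _ ≤ weightedW T b M (δ.1 / 3) K := bowenM_three_mul_le_weightedW hT hK hb.2.2 M hδ
    _ ≤ weightedWFull T b K := le_iSup₂_of_le (f := fun (δ : {ε : ℝ // 0 < ε}) M =>
          weightedW T b M δ.1 K) ⟨δ.1 / 3, hδ⟩ M le_rfl

/-- For a compact set `K`, `M^b_{N,3ε}(K) ≤ W^b_{N,ε}(K) ≤ M^b_{N,ε}(K)`;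
consequently `M^b(K) = W^b(K)`. -/
theorem stmt9 {X : Type*} [MetricSpace X] [CompactSpace X]
    (T : X → X) (hT : Continuous T)
    (K : Set X) (hK : IsCompact K)
    (b : ℕ → ℝ) (hb : GaugeSeq b) (N : ℕ) (ε : ℝ) (hε : 0 < ε) :
    bowenM T b N (3 * ε) K ≤ weightedW T b N ε K ∧
    weightedW T b N ε K ≤ bowenM T b N ε K ∧
    bowenMFull T b K = weightedWFull T b K :=
  stmt9_general T hT K hK b hb N ε hε
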